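/- arXiv:1508.05718 — 5 statements merged into one kernel-verified Lean document; each statement's English description precedes it below -/
import Mathlib

section
/- Let 𝒜 be a finite separating union-closed family of finite sets with universe U(𝒜) = ⋃_{A∈𝒜} A having elements x₁,…,x_m labeled in order of increasing frequency (frequency of x is the number of members of 𝒜 containing x). Then there exist sets X₀,…,X_{m-1} ∈ 𝒜 such that x_i ∉ X_i for all 1 ≤ i ≤ m-1, and {x_{i+1},…,x_m} ⊆ X_i for all 0 ≤ i ≤ m-1. -/
variable {α : Type*} [DecidableEq α]

/-- A family of finite sets is union-closed. -/
def UnionClosed (𝒜 : Finset (Finset α)) : Prop :=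
  ∀ A ∈ 𝒜, ∀ B ∈ 𝒜, A ∪ B ∈ 𝒜

/-- A family is separating: any two distinct elements of the universe are
separated by some member set. -/
def Separating (𝒜 : Finset (Finset α)) : Prop :=
  ∀ x ∈ 𝒜.sup id, ∀ y ∈ 𝒜.sup id, x ≠ y →
    ∃ A ∈ 𝒜, (x ∈ A ∧ y ∉ A) ∨ (y ∈ A ∧ x ∉ A)

/-- Frequency of an element: the number of member sets containing it. -/
def freq (𝒜 : Finset (Finset α)) (x : α) : ℕ := (𝒜.filter (fun A => x ∈ A)).card

lemma sup_mem_of_uc (𝒜 ℬ : Finset (Finset α)) (huc : UnionClosed 𝒜)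
    (h : ℬ ⊆ 𝒜) (hne : ℬ.Nonempty) : ℬ.sup id ∈ 𝒜 := by
  rw [← Finset.sup'_eq_sup hne]
  exact Finset.sup'_mem (↑𝒜 : Set (Finset α))
    (fun A hA B hB => by
      simpa [Finset.sup_eq_union] using huc A (by simpa using hA) B (by simpa using hB))
    ℬ hne id (fun A hA => by simpa using h hA)

theorem falgas_ravry (𝒜 : Finset (Finset α)) (h𝒜 : 𝒜.Nonempty)
    (huc : UnionClosed 𝒜) (hsep : Separating 𝒜)
    (m : ℕ) (x : ℕ → α)
    (hbij : Set.BijOn x (Set.Icc 1 m) (𝒜.sup id : Finset α))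
    (hmono : ∀ i j, 1 ≤ i → i ≤ j → j ≤ m → freq 𝒜 (x i) ≤ freq 𝒜 (x j)) :
    ∃ X : ℕ → Finset α,
      (∀ i ≤ m - 1, X i ∈ 𝒜) ∧
      (∀ i, 1 ≤ i → i ≤ m - 1 → x i ∉ X i) ∧
      (∀ i ≤ m - 1, ∀ j, i < j → j ≤ m → x j ∈ X i) := by
  -- key claim: for 1 ≤ i < j ≤ m there is a set containing x j but not x i
  have huniv : ∀ k, 1 ≤ k → k ≤ m → x k ∈ 𝒜.sup id := by
    intro k hk1 hkm
    have := hbij.mapsTo (Set.mem_Icc.mpr ⟨hk1, hkm⟩)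
    simpa using this
  have claim : ∀ i j, 1 ≤ i → i < j → j ≤ m → ∃ A ∈ 𝒜, x j ∈ A ∧ x i ∉ A := by
    intro i j hi1 hij hjm
    by_contra hc
    push_neg at hc
    have hsub : 𝒜.filter (fun A => x j ∈ A) ⊆ 𝒜.filter (fun A => x i ∈ A) := by
      intro A hA
      rw [Finset.mem_filter] at hA ⊢
      exact ⟨hA.1, hc A hA.1 hA.2⟩
    have hle : freq 𝒜 (x i) ≤ freq 𝒜 (x j) := hmono i j hi1 (le_of_lt hij) hjm
    have heq : 𝒜.filter (fun A => x j ∈ A) = 𝒜.filter (fun A => x i ∈ A) :=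
      Finset.eq_of_subset_of_card_le hsub hle
    have hne : x i ≠ x j := by
      intro h
      have := hbij.injOn (Set.mem_Icc.mpr ⟨hi1, le_trans (le_of_lt hij) hjm⟩)
        (Set.mem_Icc.mpr ⟨le_trans hi1 (le_of_lt hij), hjm⟩) h
      omega
    obtain ⟨A, hA, hcase⟩ := hsep (x i) (huniv i hi1 (le_trans (le_of_lt hij) hjm))
      (x j) (huniv j (le_trans hi1 (le_of_lt hij)) hjm) hne
    rcases hcase with ⟨hi, hj⟩ | ⟨hj, hi⟩
    · have : A ∈ 𝒜.filter (fun A => x i ∈ A) := Finset.mem_filter.mpr ⟨hA, hi⟩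
      rw [← heq, Finset.mem_filter] at this
      exact hj this.2
    · have : A ∈ 𝒜.filter (fun A => x j ∈ A) := Finset.mem_filter.mpr ⟨hA, hj⟩
      rw [heq, Finset.mem_filter] at this
      exact hi this.2
  refine ⟨fun i => if i = 0 then 𝒜.sup id else (𝒜.filter (fun A => x i ∉ A)).sup id,
    ?_, ?_, ?_⟩
  · intro i hi
    by_cases h0 : i = 0
    · simp only [h0, if_pos rfl]
      exact sup_mem_of_uc 𝒜 𝒜 huc (le_refl _) h𝒜
    · simp only [if_neg h0]
      have hi1 : 1 ≤ i := Nat.one_le_iff_ne_zero.mpr h0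
      have him : i < m := by omega
      obtain ⟨A, hA, hAj, hAi⟩ := claim i m hi1 him (le_refl m)
      exact sup_mem_of_uc 𝒜 _ huc (Finset.filter_subset _ _)
        ⟨A, Finset.mem_filter.mpr ⟨hA, hAi⟩⟩
  · intro i hi1 him
    have h0 : i ≠ 0 := by omega
    simp only [if_neg h0]
    intro hmem
    rw [Finset.mem_sup] at hmem
    obtain ⟨A, hA, hxA⟩ := hmem
    rw [Finset.mem_filter] at hA
    exact hA.2 hxA
  · intro i hi j hij hjm
    by_cases h0 : i = 0
    · simp only [if_pos h0]
      exact huniv j (by omega) hjm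
    · simp only [if_neg h0]
      have hi1 : 1 ≤ i := Nat.one_le_iff_ne_zero.mpr h0
      obtain ⟨A, hA, hAj, hAi⟩ := claim i j hi1 hij hjm
      rw [Finset.mem_sup]
      exact ⟨A, Finset.mem_filter.mpr ⟨hA, hAi⟩, hAj⟩
end

section
/- Let 𝒜 be a finite separating union-closed family of finite sets with universe of size m ≥ 1 and with |𝒜| ≤ 2m. Then there exists an element x of the universe contained in at least |𝒜|/2 member sets of 𝒜. -/
variable {α : Type*} [DecidableEq α]

theorem ucs_small_family (𝒜 : Finset (Finset α))
    (huc : UnionClosed 𝒜) (hsep : Separating 𝒜)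
    (m : ℕ) (hm : (𝒜.sup id).card = m) (hm1 : 1 ≤ m)
    (hcard : 𝒜.card ≤ 2 * m) :
    ∃ x ∈ 𝒜.sup id, 2 * (𝒜.filter (fun A => x ∈ A)).card ≥ 𝒜.card := by
  classical
  set S : Finset α := 𝒜.sup id with hSdef
  set n : ℕ := 𝒜.card with hndef
  -- S is nonempty
  have hSne : S.Nonempty := Finset.card_pos.mp (by omega)
  -- case: some element in all sets
  by_cases hall : ∃ x ∈ S, ∀ A ∈ 𝒜, x ∈ A
  · obtain ⟨x, hxS, hx⟩ := hall
    refine ⟨x, hxS, ?_⟩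
    have : 𝒜.filter (fun A => x ∈ A) = 𝒜 := Finset.filter_eq_self.mpr hx
    rw [this]; omega
  push_neg at hall
  -- every element misses some set
  -- the family is nonempty
  have hAne : 𝒜.Nonempty := by
    obtain ⟨x, hx⟩ := hSne
    obtain ⟨A, hA, _⟩ := Finset.mem_sup.mp hx
    exact ⟨A, hA⟩
  -- S itself is a member
  have hSmem : S ∈ 𝒜 := by
    have : 𝒜.sup' hAne id ∈ (↑𝒜 : Set (Finset α)) := by
      apply Finset.sup'_mem (↑𝒜 : Set (Finset α))
      · intro a ha b hb; exact huc a ha b hb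
      · intro A hA; exact hA
    rwa [Finset.sup'_eq_sup] at this
  -- define U_x
  set f : α → Finset α := fun x => (𝒜.filter (fun A => x ∉ A)).sup id with hfdef
  have hfilterne : ∀ x ∈ S, (𝒜.filter (fun A => x ∉ A)).Nonempty := by
    intro x hx
    obtain ⟨A, hA, hxA⟩ := hall x hx
    exact ⟨A, Finset.mem_filter.mpr ⟨hA, hxA⟩⟩
  have hfmem : ∀ x ∈ S, f x ∈ 𝒜 := by
    intro x hx
    have hne := hfilterne x hx
    have : (𝒜.filter (fun A => x ∉ A)).sup' hne id ∈ (↑𝒜 : Set (Finset α)) := by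
      apply Finset.sup'_mem (↑𝒜 : Set (Finset α))
      · intro a ha b hb; exact huc a ha b hb
      · intro A hA; exact (Finset.mem_filter.mp hA).1
    rwa [Finset.sup'_eq_sup] at this
  have hnotmemf : ∀ x, x ∉ f x := by
    intro x hx
    obtain ⟨A, hA, hxA⟩ := Finset.mem_sup.mp hx
    exact (Finset.mem_filter.mp hA).2 hxA
  -- z ∉ f x ↔ every member containing z contains x
  have hmemf : ∀ x z, z ∉ f x ↔ ∀ A ∈ 𝒜, z ∈ A → x ∈ A := by
    intro x z
    constructor
    · intro h A hA hzA
      by_contra hxA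
      exact h (Finset.mem_sup.mpr ⟨A, Finset.mem_filter.mpr ⟨hA, hxA⟩, hzA⟩)
    · intro h hz
      obtain ⟨A, hA, hzA⟩ := Finset.mem_sup.mp hz
      obtain ⟨hA𝒜, hxA⟩ := Finset.mem_filter.mp hA
      exact hxA (h A hA𝒜 hzA)
  -- A ⊆ f x for members avoiding x
  have hsubf : ∀ x, ∀ A ∈ 𝒜, x ∉ A → A ⊆ f x := by
    intro x A hA hxA
    exact Finset.le_sup (f := id) (Finset.mem_filter.mpr ⟨hA, hxA⟩)
  -- f is injective on S
  have hinj : ∀ x ∈ S, ∀ y ∈ S, f x = f y → x = y := by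
    intro x hx y hy hfxy
    by_contra hne
    obtain ⟨A, hA, hcase⟩ := hsep x hx y hy hne
    rcases hcase with ⟨hxA, hyA⟩ | ⟨hyA, hxA⟩
    · have : A ⊆ f y := hsubf y A hA hyA
      exact hnotmemf x (hfxy ▸ this hxA)
    · have : A ⊆ f x := hsubf x A hA hxA
      exact hnotmemf y (hfxy.symm ▸ this hyA)
  -- the m+1 distinct members
  set 𝒰 : Finset (Finset α) := insert S (S.image f) with h𝒰def
  have hfneS : ∀ x ∈ S, f x ≠ S := by
    intro x hx h
    exact hnotmemf x (h ▸ hx)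
  have hSnotim : S ∉ S.image f := by
    intro h
    obtain ⟨x, hx, hfx⟩ := Finset.mem_image.mp h
    exact hfneS x hx hfx
  have h𝒰card : 𝒰.card = m + 1 := by
    rw [h𝒰def, Finset.card_insert_of_notMem hSnotim,
      Finset.card_image_of_injOn (fun x hx y hy => hinj x hx y hy), hm]
  have h𝒰sub : 𝒰 ⊆ 𝒜 := by
    intro A hA
    rcases Finset.mem_insert.mp hA with h | h
    · exact h ▸ hSmem
    · obtain ⟨x, hx, hfx⟩ := Finset.mem_image.mp h
      exact hfx ▸ hfmem x hx
  have hnm : m + 1 ≤ n := h𝒰card ▸ Finset.card_le_card h𝒰sub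
  -- the set of minimal elements
  set Min : Finset α := S.filter (fun x => ∀ z ∈ S, (∀ A ∈ 𝒜, x ∈ A → z ∈ A) → z = x)
    with hMindef
  set t : ℕ := Min.card with htdef
  -- degree function
  set dg : α → ℕ := fun x => (𝒜.filter (fun A => x ∈ A)).card with hdgdef
  -- Min is nonempty: max degree element is minimal
  have hMinne : Min.Nonempty := by
    obtain ⟨x, hxS, hxmax⟩ := Finset.exists_max_image S dg hSne
    refine ⟨x, Finset.mem_filter.mpr ⟨hxS, ?_⟩⟩
    intro z hz hRzx
    by_contra hne
    obtain ⟨A, hA, hcase⟩ := hsep z hz x hxS hne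
    rcases hcase with ⟨hzA, hxA⟩ | ⟨hxA, hzA⟩
    · -- sets containing x ⊂ sets containing z, strictly
      have hsub : 𝒜.filter (fun B => x ∈ B) ⊂ 𝒜.filter (fun B => z ∈ B) := by
        refine Finset.ssubset_iff_of_subset ?_ |>.mpr ⟨A, Finset.mem_filter.mpr ⟨hA, hzA⟩,
          fun h => hxA (Finset.mem_filter.mp h).2⟩
        intro B hB
        obtain ⟨hB𝒜, hxB⟩ := Finset.mem_filter.mp hB
        exact Finset.mem_filter.mpr ⟨hB𝒜, hRzx B hB𝒜 hxB⟩
      have := Finset.card_lt_card hsub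
      have := hxmax z hz
      simp only [hdgdef] at this
      omega
    · exact hzA (hRzx A hA hxA)
  have ht1 : 1 ≤ t := Finset.card_pos.mpr hMinne
  have hMinS : Min ⊆ S := Finset.filter_subset _ _
  -- double counting
  have hdc : ∑ x ∈ Min, (𝒜.filter (fun A => x ∉ A)).card
      = ∑ A ∈ 𝒜, (Min.filter (fun x => x ∉ A)).card := by
    simp only [Finset.card_filter]
    exact Finset.sum_comm
  -- bound for each U_x : at most one minimal element missed, none if x not minimal
  have hUxbound : ∀ x ∈ S, (Min.filter (fun z => z ∉ f x)).card ≤ if x ∈ Min then 1 else 0 := by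
    intro x hx
    have hsub : Min.filter (fun z => z ∉ f x) ⊆ {x} := by
      intro z hz
      obtain ⟨hzMin, hznf⟩ := Finset.mem_filter.mp hz
      obtain ⟨hzS, hzmin⟩ := Finset.mem_filter.mp hzMin
      have hRxz : ∀ A ∈ 𝒜, z ∈ A → x ∈ A := (hmemf x z).mp hznf
      -- z minimal, x ≼ z, so x = z
      have := hzmin x hx (fun A hA hzA => hRxz A hA hzA)
      simp [this]
    by_cases hxm : x ∈ Min
    · simpa [hxm] using Finset.card_le_card hsub
    · simp only [hxm, if_false, Nat.le_zero, Finset.card_eq_zero]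
      rw [Finset.eq_empty_iff_forall_notMem]
      intro z hz
      have h1 := hsub hz
      rw [Finset.mem_singleton] at h1
      subst h1
      exact hxm (Finset.mem_filter.mp hz).1
  -- sum over 𝒰
  have hsum𝒰 : ∑ A ∈ 𝒰, (Min.filter (fun x => x ∉ A)).card ≤ t := by
    rw [h𝒰def, Finset.sum_insert hSnotim]
    have hSterm : (Min.filter (fun x => x ∉ S)).card = 0 := by
      rw [Finset.card_eq_zero, Finset.filter_eq_empty_iff]
      intro x hx
      simp [hMinS hx]
    rw [hSterm, zero_add, Finset.sum_image (fun x hx y hy => hinj x hx y hy)]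
    calc ∑ x ∈ S, (Min.filter (fun z => z ∉ f x)).card
        ≤ ∑ x ∈ S, if x ∈ Min then 1 else 0 := Finset.sum_le_sum hUxbound
      _ = (S.filter (fun x => x ∈ Min)).card := (Finset.card_filter _ _).symm
      _ = t := by rw [Finset.filter_mem_eq_inter, Finset.inter_eq_right.mpr hMinS]
  -- sum over the rest
  have hsumrest : ∑ A ∈ 𝒜 \ 𝒰, (Min.filter (fun x => x ∉ A)).card ≤ (n - (m + 1)) * t := by
    calc ∑ A ∈ 𝒜 \ 𝒰, (Min.filter (fun x => x ∉ A)).card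
        ≤ ∑ _A ∈ 𝒜 \ 𝒰, t :=
          Finset.sum_le_sum (fun A _ => Finset.card_le_card (Finset.filter_subset _ _))
      _ = (𝒜 \ 𝒰).card * t := by rw [Finset.sum_const, smul_eq_mul]
      _ = (n - (m + 1)) * t := by rw [Finset.card_sdiff_of_subset h𝒰sub, h𝒰card]
  -- total bound
  have htotal : ∑ x ∈ Min, (𝒜.filter (fun A => x ∉ A)).card ≤ t * (n - m) := by
    rw [hdc, ← Finset.sum_sdiff h𝒰sub]
    have : (n - (m + 1)) * t + t ≤ t * (n - m) := by
      have : (n - (m + 1)) * t + t = ((n - (m+1)) + 1) * t := by ring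
      rw [this]
      have : n - (m + 1) + 1 = n - m := by omega
      rw [this, Nat.mul_comm]
    omega
  -- extract a good element
  have hex : ∃ x ∈ Min, (𝒜.filter (fun A => x ∉ A)).card ≤ n - m := by
    by_contra h
    push_neg at h
    have : ∑ x ∈ Min, (n - m + 1) ≤ ∑ x ∈ Min, (𝒜.filter (fun A => x ∉ A)).card :=
      Finset.sum_le_sum (fun x hx => h x hx)
    rw [Finset.sum_const, smul_eq_mul] at this
    have : t * (n - m + 1) ≤ t * (n - m) := le_trans this htotal
    have := Nat.le_of_mul_le_mul_left this (by omega : 0 < t)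
    omega
  obtain ⟨x, hxMin, hxle⟩ := hex
  refine ⟨x, hMinS hxMin, ?_⟩
  have hsplit := Finset.card_filter_add_card_filter_not (s := 𝒜)
    (fun A => x ∈ A)
  -- (filter (x ∈ ·)).card + (filter (x ∉ ·)).card = n
  omega
end

section
/- Let 𝒜 be a finite separating union-closed family with universe elements x₁,…,x_m labeled in order of increasing frequency, and suppose |𝒜| ≥ 1 and m ≥ 2. Then the most frequent element x_m is contained in at least m member sets of 𝒜. -/
variable {α : Type*} [DecidableEq α]

lemma sup_mem_of_subset {𝒜 : Finset (Finset α)} (huc : UnionClosed 𝒜)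
    {ℬ : Finset (Finset α)} (hne : ℬ.Nonempty) (hsub : ℬ ⊆ 𝒜) :
    ℬ.sup id ∈ 𝒜 := by
  induction hne using Finset.Nonempty.cons_induction with
  | singleton A => simpa using hsub (Finset.mem_singleton_self A)
  | cons A s hA hs ih =>
      rw [Finset.sup_cons]
      exact huc A (hsub (Finset.mem_cons_self A s)) (s.sup id)
        (ih (fun B hB => hsub (Finset.mem_cons_of_mem hB)))

theorem most_frequent_element (𝒜 : Finset (Finset α))
    (huc : UnionClosed 𝒜) (hsep : Separating 𝒜)
    (m : ℕ) (x : ℕ → α)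
    (hbij : Set.BijOn x (Set.Icc 1 m) (𝒜.sup id : Finset α))
    (hmono : ∀ i j, 1 ≤ i → i ≤ j → j ≤ m → freq 𝒜 (x i) ≤ freq 𝒜 (x j))
    (h𝒜 : 1 ≤ 𝒜.card) (hm : 2 ≤ m) :
    m ≤ freq 𝒜 (x m) := by
  have h1m : (1:ℕ) ≤ m := le_trans one_le_two hm
  have hmemU : ∀ i, 1 ≤ i → i ≤ m → x i ∈ 𝒜.sup id := fun i h1 h2 =>
    hbij.mapsTo (Set.mem_Icc.mpr ⟨h1, h2⟩)
  have hxne : ∀ i j, 1 ≤ i → i ≤ m → 1 ≤ j → j ≤ m → i ≠ j → x i ≠ x j :=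
    fun i j a b c d e h =>
      e (hbij.injOn (Set.mem_Icc.mpr ⟨a, b⟩) (Set.mem_Icc.mpr ⟨c, d⟩) h)
  have key : ∀ i j, 1 ≤ i → i ≤ j → j ≤ m → i ≠ j → ∃ A ∈ 𝒜, x j ∈ A ∧ x i ∉ A := by
    intro i j h1 hij hjm hne
    by_contra hcon
    push_neg at hcon
    have hsub : 𝒜.filter (fun A => x j ∈ A) ⊆ 𝒜.filter (fun A => x i ∈ A) := by
      intro A hA
      rw [Finset.mem_filter] at *
      exact ⟨hA.1, hcon A hA.1 hA.2⟩
    have hc : (𝒜.filter (fun A => x i ∈ A)).card ≤ (𝒜.filter (fun A => x j ∈ A)).card :=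
      hmono i j h1 hij hjm
    have heq := Finset.eq_of_subset_of_card_le hsub hc
    have hxij := hxne i j h1 (le_trans hij hjm) (le_trans h1 hij) hjm hne
    obtain ⟨A, hA, hor⟩ := hsep (x i) (hmemU i h1 (le_trans hij hjm)) (x j)
      (hmemU j (le_trans h1 hij) hjm) hxij
    have hiff : (A ∈ 𝒜.filter (fun B => x j ∈ B)) ↔ (A ∈ 𝒜.filter (fun B => x i ∈ B)) := by
      rw [heq]
    simp only [Finset.mem_filter, hA, true_and] at hiff
    rcases hor with ⟨h1', h2'⟩ | ⟨h1', h2'⟩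
    · exact h2' (hiff.mpr h1')
    · exact h2' (hiff.mp h1')
  set f : ℕ → Finset α :=
    fun i => if i = 0 then 𝒜.sup id else (𝒜.filter (fun A => x i ∉ A)).sup id with hf
  have hAne : 𝒜.Nonempty := Finset.card_pos.mp h𝒜
  have hfmem : ∀ i, 1 ≤ i → i < m → f i ∈ 𝒜 ∧ x m ∈ f i := by
    intro i h1 hlt
    obtain ⟨A, hA, hxm, hxi⟩ := key i m h1 (le_of_lt hlt) le_rfl (Nat.ne_of_lt hlt)
    have hAf : A ∈ 𝒜.filter (fun B => x i ∉ B) := Finset.mem_filter.mpr ⟨hA, hxi⟩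
    constructor
    · simp only [hf, if_neg (by omega : ¬ i = 0)]
      exact sup_mem_of_subset huc ⟨A, hAf⟩ (Finset.filter_subset _ _)
    · simp only [hf, if_neg (by omega : ¬ i = 0)]
      exact Finset.mem_sup.mpr ⟨A, hAf, hxm⟩
  have hnotmem : ∀ j, 1 ≤ j → x j ∉ f j := by
    intro j h1
    simp only [hf, if_neg (by omega : ¬ j = 0)]
    intro hx
    obtain ⟨A, hA, hxA⟩ := Finset.mem_sup.mp hx
    exact (Finset.mem_filter.mp hA).2 hxA
  have hmemlt : ∀ i j, i < j → j < m → x j ∈ f i := by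
    intro i j hij hjm
    rcases Nat.eq_zero_or_pos i with h0 | h1
    · subst h0
      simp only [hf, if_pos rfl]
      exact hmemU j (by omega) (le_of_lt hjm)
    · obtain ⟨A, hA, hxj, hxi⟩ := key i j h1 (le_of_lt hij) (le_of_lt hjm) (Nat.ne_of_lt hij)
      simp only [hf, if_neg (by omega : ¬ i = 0)]
      exact Finset.mem_sup.mpr ⟨A, Finset.mem_filter.mpr ⟨hA, hxi⟩, hxj⟩
  have hinj : Set.InjOn f (Finset.range m) := by
    intro i hi j hj hfe
    simp only [Finset.coe_range, Set.mem_Iio] at hi hj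
    by_contra hne
    rcases Nat.lt_or_ge i j with h | h
    · exact hnotmem j (by omega) (hfe ▸ hmemlt i j h hj)
    · have h' : j < i := by omega
      exact hnotmem i (by omega) (hfe.symm ▸ hmemlt j i h' hi)
  have hmaps : ∀ i ∈ Finset.range m, f i ∈ 𝒜.filter (fun A => x m ∈ A) := by
    intro i hi
    rw [Finset.mem_range] at hi
    rcases Nat.eq_zero_or_pos i with h0 | h1
    · subst h0
      simp only [hf, if_pos rfl]
      exact Finset.mem_filter.mpr
        ⟨sup_mem_of_subset huc hAne (Finset.Subset.refl 𝒜), hmemU m h1m le_rfl⟩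
    · obtain ⟨hmem, hxm⟩ := hfmem i h1 hi
      exact Finset.mem_filter.mpr ⟨hmem, hxm⟩
  calc m = (Finset.range m).card := (Finset.card_range m).symm
    _ ≤ (𝒜.filter (fun A => x m ∈ A)).card := Finset.card_le_card_of_injOn f hmaps hinj
    _ = freq 𝒜 (x m) := rfl
end

section
/- Let m, c, n, k be real numbers and suppose n ≤ k(m+c) + (2^k − k·2^{k-1}) + (m−k)(1−k) and n > 2(m+c), with k > 2. Then n ≥ 2( ((k−1)m + (k−2)2^{k-1} + k − k²) / (k−2) ). -/
theorem sol9 (m c n k : ℝ) (hk : k > 2)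
    (h1 : n ≤ k * (m + c) + ((2:ℝ) ^ k - k * (2:ℝ) ^ (k - 1)) + (m - k) * (1 - k))
    (h2 : n > 2 * (m + c)) :
    n ≥ 2 * (((k - 1) * m + (k - 2) * (2:ℝ) ^ (k - 1) + k - k ^ 2) / (k - 2)) := by
  have hp : (2:ℝ) ^ k = 2 * (2:ℝ) ^ (k - 1) := by
    rw [show k = (k - 1) + 1 by ring, Real.rpow_add (by norm_num), Real.rpow_one]
    ring_nf
  rw [ge_iff_le, ← mul_div_assoc, div_le_iff₀ (by linarith)]
  nlinarith [hp, h1, h2, hk]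
end

section
/- Let 𝒜 be a finite union-closed family with universe elements x₁,…,x_m ordered by increasing frequency, let Û ⊆ {x₁,…,x_m} with |Û| = k be such that every nonempty member of 𝒜 meets Û, each element of Û has frequency at most m+c, 𝒜 contains 2^k pairwise distinct sets P_B (B ⊆ Û) with P_B ∩ Û = B, and 𝒜 contains m−k further distinct member sets each containing all of Û and distinct from all P_B. Then |𝒜| ≤ k(m+c) + (2^k − k·2^{k-1}) + (m−k)(1−k). -/
variable {α : Type*} [DecidableEq α]

lemma sum_card_powerset_aux (s : Finset α) :
    ∑ B ∈ s.powerset, B.card = s.card * 2 ^ (s.card - 1) := by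
  induction s using Finset.induction_on with
  | empty => simp
  | @insert a s ha ih =>
    rw [Finset.sum_powerset_insert ha, ih, Finset.card_insert_of_notMem ha]
    have : ∑ t ∈ s.powerset, (insert a t).card = ∑ t ∈ s.powerset, (t.card + 1) := by
      apply Finset.sum_congr rfl
      intro t ht
      rw [Finset.card_insert_of_notMem fun h => ha (Finset.mem_powerset.1 ht h)]
    rw [this, Finset.sum_add_distrib, ih, Finset.sum_const, Finset.card_powerset,
      smul_eq_mul, mul_one]
    rcases Nat.eq_zero_or_pos s.card with h | h
    · simp [h]
    · obtain ⟨n, hn⟩ := Nat.exists_eq_succ_of_ne_zero h.ne'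
      rw [hn]
      simp only [Nat.succ_sub_one, Nat.add_sub_cancel]
      rw [pow_succ]; ring

theorem counting_bound (𝒜 : Finset (Finset α)) (huc : UnionClosed 𝒜)
    (m k : ℕ) (c : ℝ) (x : ℕ → α)
    (hbij : Set.BijOn x (Set.Icc 1 m) (𝒜.sup id : Finset α))
    (hmono : ∀ i j, 1 ≤ i → i ≤ j → j ≤ m → freq 𝒜 (x i) ≤ freq 𝒜 (x j))
    (Uhat : Finset α) (hUsub : Uhat ⊆ 𝒜.sup id) (hk : Uhat.card = k)
    (htrans : ∀ A ∈ 𝒜, A.Nonempty → (A ∩ Uhat).Nonempty)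
    (hfreq : ∀ u ∈ Uhat, (freq 𝒜 u : ℝ) ≤ (m : ℝ) + c)
    (P : Finset α → Finset α)
    (hP : ∀ B ⊆ Uhat, P B ∈ 𝒜 ∧ P B ∩ Uhat = B)
    (hPinj : ∀ B₁, B₁ ⊆ Uhat → ∀ B₂, B₂ ⊆ Uhat → P B₁ = P B₂ → B₁ = B₂)
    (𝒮 : Finset (Finset α)) (h𝒮sub : 𝒮 ⊆ 𝒜) (h𝒮card : 𝒮.card = m - k)
    (h𝒮full : ∀ S ∈ 𝒮, Uhat ⊆ S)
    (h𝒮new : ∀ S ∈ 𝒮, ∀ B ⊆ Uhat, S ≠ P B) :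
    (𝒜.card : ℝ) ≤ (k : ℝ) * ((m : ℝ) + c) +
      ((2:ℝ) ^ k - (k : ℝ) * (2:ℝ) ^ (k - 1 : ℕ)) +
      ((m : ℝ) - k) * (1 - k) := by
  classical
  set PP : Finset (Finset α) := Uhat.powerset.image P with hPPdef
  -- basic facts about PP
  have hPPsub : PP ⊆ 𝒜 := by
    intro A hA
    obtain ⟨B, hB, rfl⟩ := Finset.mem_image.1 hA
    exact (hP B (Finset.mem_powerset.1 hB)).1
  have hPPcard : PP.card = 2 ^ k := by
    rw [hPPdef, Finset.card_image_of_injOn, Finset.card_powerset, hk]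
    intro B₁ h1 B₂ h2 h
    exact hPinj B₁ (Finset.mem_powerset.1 h1) B₂ (Finset.mem_powerset.1 h2) h
  -- P ∅ = ∅
  have hPempty : P ∅ = ∅ := by
    by_contra h
    have := htrans (P ∅) (hP ∅ (Finset.empty_subset _)).1
      (Finset.nonempty_iff_ne_empty.2 h)
    rw [(hP ∅ (Finset.empty_subset _)).2] at this
    exact Finset.not_nonempty_empty this
  -- disjointness
  have hdisj : Disjoint PP 𝒮 := by
    rw [Finset.disjoint_right]
    intro S hS hSPP
    obtain ⟨B, hB, hPB⟩ := Finset.mem_image.1 hSPP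
    exact h𝒮new S hS B (Finset.mem_powerset.1 hB) hPB.symm
  set ℛ : Finset (Finset α) := 𝒜 \ (PP ∪ 𝒮) with hℛdef
  have hsplit : 𝒜 = (PP ∪ 𝒮) ∪ ℛ := by
    rw [hℛdef, Finset.union_sdiff_of_subset (Finset.union_subset hPPsub h𝒮sub)]
  have hdisj2 : Disjoint (PP ∪ 𝒮) ℛ := Finset.disjoint_sdiff
  -- the total incidence count
  have hdc : ∑ A ∈ 𝒜, (A ∩ Uhat).card = ∑ u ∈ Uhat, freq 𝒜 u := by
    have h1 : ∀ A : Finset α, (A ∩ Uhat).card = ∑ u ∈ Uhat, if u ∈ A then 1 else 0 := by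
      intro A
      rw [Finset.inter_comm, ← Finset.filter_mem_eq_inter, Finset.card_filter]
    simp only [h1, freq, Finset.card_filter]
    exact Finset.sum_comm
  -- upper bound on incidences
  have hupper : ((∑ A ∈ 𝒜, (A ∩ Uhat).card : ℕ) : ℝ) ≤ (k : ℝ) * ((m : ℝ) + c) := by
    rw [hdc]
    push_cast
    calc ∑ u ∈ Uhat, (freq 𝒜 u : ℝ) ≤ ∑ u ∈ Uhat, ((m : ℝ) + c) :=
          Finset.sum_le_sum hfreq
      _ = (k : ℝ) * ((m : ℝ) + c) := by rw [Finset.sum_const, hk, nsmul_eq_mul]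
  -- lower bound: sums over the pieces
  have hsumPP : ∑ A ∈ PP, (A ∩ Uhat).card = k * 2 ^ (k - 1) := by
    rw [hPPdef, Finset.sum_image (fun B₁ h1 B₂ h2 h =>
      hPinj B₁ (Finset.mem_powerset.1 h1) B₂ (Finset.mem_powerset.1 h2) h)]
    rw [← hk, ← sum_card_powerset_aux Uhat]
    exact Finset.sum_congr rfl fun B hB => by
      rw [(hP B (Finset.mem_powerset.1 hB)).2]
  have hsum𝒮 : ∑ A ∈ 𝒮, (A ∩ Uhat).card = (m - k) * k := by
    rw [← h𝒮card, ← hk]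
    rw [Finset.sum_congr rfl (fun S hS => by
      rw [Finset.inter_eq_right.2 (h𝒮full S hS)]), Finset.sum_const, smul_eq_mul]
  have hsumℛ : ℛ.card ≤ ∑ A ∈ ℛ, (A ∩ Uhat).card := by
    calc ℛ.card = ∑ _A ∈ ℛ, 1 := by rw [Finset.sum_const, smul_eq_mul, mul_one]
      _ ≤ ∑ A ∈ ℛ, (A ∩ Uhat).card := by
        apply Finset.sum_le_sum
        intro A hA
        have hA𝒜 : A ∈ 𝒜 := (Finset.mem_sdiff.1 hA).1
        have hAPP : A ∉ PP := fun h =>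
          (Finset.mem_sdiff.1 hA).2 (Finset.mem_union_left _ h)
        have hAne : A.Nonempty := by
          rcases Finset.eq_empty_or_nonempty A with rfl | h
          · exact absurd (Finset.mem_image.2 ⟨∅, Finset.mem_powerset.2
              (Finset.empty_subset _), hPempty⟩) hAPP
          · exact h
        exact Finset.card_pos.2 (htrans A hA𝒜 hAne)
  have hlower : k * 2 ^ (k - 1) + (m - k) * k + ℛ.card ≤ ∑ A ∈ 𝒜, (A ∩ Uhat).card := by
    rw [hsplit, Finset.sum_union hdisj2, Finset.sum_union hdisj, hsumPP, hsum𝒮]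
    omega
  -- cardinality split
  have hcard : 𝒜.card = 2 ^ k + (m - k) + ℛ.card := by
    rw [hsplit, Finset.card_union_of_disjoint hdisj2, Finset.card_union_of_disjoint hdisj,
      hPPcard, h𝒮card]
  -- final real arithmetic
  have hlowerR : (k : ℝ) * 2 ^ (k - 1 : ℕ) + ((m - k : ℕ) : ℝ) * k + (ℛ.card : ℝ)
      ≤ ((∑ A ∈ 𝒜, (A ∩ Uhat).card : ℕ) : ℝ) := by
    exact_mod_cast hlower
  have hcast : ((m - k : ℕ) : ℝ) * (1 - k) ≤ ((m : ℝ) - k) * (1 - k) := by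
    rcases le_or_gt k m with h | h
    · rw [Nat.cast_sub h]
    · have h0 : ((m - k : ℕ) : ℝ) = 0 := by
        rw [Nat.sub_eq_zero_of_le h.le, Nat.cast_zero]
      rw [h0, zero_mul]
      have h1 : (m : ℝ) - k ≤ 0 := by
        have : (m : ℝ) ≤ k := by exact_mod_cast h.le
        linarith
      have h2 : (1 : ℝ) - k ≤ 0 := by
        have : (1 : ℝ) ≤ k := by exact_mod_cast Nat.one_le_iff_ne_zero.2 (by omega)
        linarith
      nlinarith [h1, h2]
  have hcardR : (𝒜.card : ℝ) = 2 ^ k + ((m - k : ℕ) : ℝ) + (ℛ.card : ℝ) := by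
    exact_mod_cast hcard
  nlinarith [hupper, hlowerR, hcast, hcardR]
end
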